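/- With $\check P = F Q F^T$ where $F$ is the block lower-triangular lifted transition matrix (blocks $\Phi(t_i,t_j)$, identity on the diagonal) and $Q = \mathrm{diag}(Q_0,\ldots,Q_N)$ with each $Q_n$ invertible, the inverse kernel matrix $\check P^{-1} = F^{-T} Q^{-1} F^{-1}$ is block-tridiagonal: the $(i,j)$ block of $\check P^{-1}$ is zero whenever $|i-j| > 1$. -/

import Mathlib

/-!
The cocycle identity `Φ(tᵢ, tₖ) Φ(tₖ, tⱼ) = Φ(tᵢ, tⱼ)` makes `F⁻¹` lower bidiagonal, with only
`I` and `-Φ(tᵢ, tᵢ₋₁)` as nonzero blocks. Then `P̌⁻¹ = F⁻ᵀ Q⁻¹ F⁻¹` has `(i, j)` block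
`∑ₖ ((F⁻¹)ₖᵢ)ᵀ Qₖ⁻¹ (F⁻¹)ₖⱼ`, and a nonzero summand needs `k ∈ {i, i + 1} ∩ {j, j + 1}`,
which is empty when `|i - j| > 1`.
-/

open Matrix

/-- Blockwise transpose of a block matrix. -/
def blockT {N d : ℕ}
    (A : Matrix (Fin N) (Fin N) (Matrix (Fin d) (Fin d) ℝ)) :
    Matrix (Fin N) (Fin N) (Matrix (Fin d) (Fin d) ℝ) :=
  Matrix.of fun i j => (A j i)ᵀ

section BlockTranspose

variable {N d : ℕ}

lemma blockT_one : blockT (N := N) (d := d) 1 = 1 := by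
  ext1 i j
  by_cases h : i = j <;> simp [blockT, one_apply, h, eq_comm]

lemma blockT_mul (X Y : Matrix (Fin N) (Fin N) (Matrix (Fin d) (Fin d) ℝ)) :
    blockT (X * Y) = blockT Y * blockT X := by
  ext1 i j
  simp [blockT, mul_apply, transpose_sum, transpose_mul]

lemma blockT_mul_blockT_eq_one {X Y : Matrix (Fin N) (Fin N) (Matrix (Fin d) (Fin d) ℝ)}
    (h : X * Y = 1) : blockT Y * blockT X = 1 := by
  rw [← blockT_mul, h, blockT_one]

end BlockTranspose

lemma mul_mul_mul_rev_eq_one {M : Type*} [Monoid M] {a a' b b' c c' : M}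
    (ha : a * a' = 1) (hb : b * b' = 1) (hc : c * c' = 1) :
    a * b * c * (c' * b' * a') = 1 := by
  calc a * b * c * (c' * b' * a') = a * (b * (c * c') * b') * a' := by simp only [mul_assoc]
    _ = 1 := by rw [hc, mul_one, hb, mul_one, ha]

lemma diagonal_mul_diagonal_eq_one {n R : Type*} [Fintype n] [DecidableEq n] [Semiring R]
    {u v : n → R} (h : ∀ k, u k * v k = 1) : diagonal u * diagonal v = 1 := by
  rw [diagonal_mul_diagonal, ← diagonal_one]
  exact congrArg diagonal (funext h)

lemma sum_ite_val_eq_add_one {M : Type*} [AddCommMonoid M] {n : ℕ} (i : Fin n)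
    (f : Fin n → M) :
    ∑ k : Fin n, (if (i : ℕ) = k + 1 then f k else 0) =
      if h : 0 < (i : ℕ) then f ⟨i - 1, by omega⟩ else 0 := by
  split_ifs with hi
  · rw [Finset.sum_eq_single ⟨i - 1, by omega⟩]
    · simp only [ite_eq_left_iff]
      omega
    · intro k _ hk
      rw [if_neg]
      exact fun hik => hk (Fin.ext (by simp only; omega))
    · simp
  · exact Finset.sum_eq_zero fun k _ => if_neg (by omega)

section Transition

variable {R : Type*} [Ring R] {n : ℕ} (φ : Fin n → Fin n → R)

/-- The lifted transition matrix `F`, for `φ i j = Φ(tᵢ, tⱼ)`. -/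
def liftedTransition : Matrix (Fin n) (Fin n) R :=
  of fun i j => if (j : ℕ) ≤ i then φ i j else 0

def transitionInverse : Matrix (Fin n) (Fin n) R :=
  of fun i j => if (i : ℕ) = j + 1 then -φ i j else if j = i then 1 else 0

lemma transitionInverse_apply_eq_zero {i j : Fin n} (h : i ≠ j ∧ (i : ℕ) ≠ j + 1) :
    transitionInverse φ i j = 0 := by
  simp [transitionInverse, h.2, Ne.symm h.1]

lemma transitionInverse_mul_apply (i j : Fin n) :
    (transitionInverse φ * liftedTransition φ) i j =
      liftedTransition φ i j -
        if h : 0 < (i : ℕ) then φ i ⟨i - 1, by omega⟩ * liftedTransition φ ⟨i - 1, by omega⟩ j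
        else 0 := by
  have hterm : ∀ k, transitionInverse φ i k * liftedTransition φ k j =
      (if k = i then liftedTransition φ i j else 0) -
        if (i : ℕ) = k + 1 then φ i k * liftedTransition φ k j else 0 := by
    intro k
    by_cases hik : (i : ℕ) = k + 1
    · have hki : k ≠ i := fun h => by subst h; omega
      simp [transitionInverse, hik, hki]
    · by_cases hki : k = i
      · subst hki; simp [transitionInverse]
      · simp [transitionInverse, hik, hki]
  rw [mul_apply, Finset.sum_congr rfl fun k _ => hterm k, Finset.sum_sub_distrib,
    Finset.sum_ite_eq', sum_ite_val_eq_add_one]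
  simp

variable {φ}

lemma transitionInverse_mul_liftedTransition (h_id : ∀ i, φ i i = 1)
    (h_comp : ∀ i j k, φ i j * φ j k = φ i k) :
    transitionInverse φ * liftedTransition φ = 1 := by
  ext1 i j
  rw [transitionInverse_mul_apply, one_apply]
  simp only [liftedTransition, of_apply]
  rcases lt_trichotomy (j : ℕ) i with hji | hij | hij
  · have hi : 0 < (i : ℕ) := by omega
    have hne : i ≠ j := fun h => by subst h; omega
    rw [if_pos hji.le, dif_pos hi, if_pos (show (j : ℕ) ≤ i - 1 by omega), h_comp, sub_self,
      if_neg hne]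
  · obtain rfl := Fin.ext hij
    simp only [le_refl, if_true, h_id, sub_eq_self, dite_eq_right_iff]
    intro hj
    rw [if_neg (show ¬ (j : ℕ) ≤ j - 1 by omega), mul_zero]
  · have hne : i ≠ j := fun h => by subst h; omega
    have hle : ¬ (j : ℕ) ≤ i - 1 := by omega
    simp [hle, hne, hij.not_ge]

end Transition

lemma blockT_transitionInverse_mul_diagonal_mul_apply_eq_zero {n d : ℕ}
    (φ : Fin n → Fin n → Matrix (Fin d) (Fin d) ℝ) (D : Fin n → Matrix (Fin d) (Fin d) ℝ)
    {i j : Fin n} (hij : (i : ℕ) + 1 < j ∨ (j : ℕ) + 1 < i) :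
    (blockT (transitionInverse φ) * diagonal D * transitionInverse φ) i j = 0 := by
  rw [mul_apply]
  refine Finset.sum_eq_zero fun k _ => ?_
  rw [mul_diagonal]
  by_cases hk : (k : ℕ) = i ∨ (k : ℕ) = i + 1
  · have hkj : transitionInverse φ k j = 0 :=
      transitionInverse_apply_eq_zero φ ⟨fun h => by subst h; omega, by omega⟩
    rw [hkj, mul_zero]
  · have hki : transitionInverse φ k i = 0 :=
      transitionInverse_apply_eq_zero φ ⟨fun h => by subst h; omega, by omega⟩
    simp [blockT, hki]

theorem inverse_kernel_block_tridiagonal_general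
    {d N : ℕ} (t : Fin (N + 1) → ℝ)
    (Φ : ℝ → ℝ → Matrix (Fin d) (Fin d) ℝ)
    (hΦ_id : ∀ s : ℝ, Φ s s = 1)
    (hΦ_comp : ∀ a b c : ℝ, Φ a b * Φ b c = Φ a c)
    (Q Qinv : Fin (N + 1) → Matrix (Fin d) (Fin d) ℝ)
    (hQ : ∀ n, Q n * Qinv n = 1 ∧ Qinv n * Q n = 1)
    (F Finv : Matrix (Fin (N + 1)) (Fin (N + 1)) (Matrix (Fin d) (Fin d) ℝ))
    (hF : ∀ i j : Fin (N + 1),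
      F i j = if (j : ℕ) ≤ (i : ℕ) then Φ (t i) (t j) else 0)
    (hFinv : ∀ i j : Fin (N + 1),
      Finv i j = if (i : ℕ) = (j : ℕ) + 1 then -Φ (t i) (t j)
                 else if j = i then 1 else 0)
    (P A : Matrix (Fin (N + 1)) (Fin (N + 1)) (Matrix (Fin d) (Fin d) ℝ))
    (hP : P = F * Matrix.diagonal Q * blockT F)
    (hA : A = blockT Finv * Matrix.diagonal Qinv * Finv) :
    (P * A = 1 ∧ A * P = 1) ∧
      ∀ i j : Fin (N + 1), ((i : ℕ) + 1 < (j : ℕ) ∨ (j : ℕ) + 1 < (i : ℕ)) →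
        A i j = 0 := by
  have hF : F = liftedTransition fun i j => Φ (t i) (t j) := ext hF
  have hFinv : Finv = transitionInverse fun i j => Φ (t i) (t j) := ext hFinv
  have hFinvF : Finv * F = 1 := by
    rw [hF, hFinv]
    exact transitionInverse_mul_liftedTransition (fun _ => hΦ_id _) (fun _ _ _ => hΦ_comp _ _ _)
  have hFFinv : F * Finv = 1 := mul_eq_one_comm.mp hFinvF
  refine ⟨⟨?_, ?_⟩, ?_⟩
  · rw [hP, hA]
    exact mul_mul_mul_rev_eq_one hFFinv (diagonal_mul_diagonal_eq_one fun n => (hQ n).1)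
      (blockT_mul_blockT_eq_one hFinvF)
  · rw [hP, hA]
    exact mul_mul_mul_rev_eq_one (blockT_mul_blockT_eq_one hFFinv)
      (diagonal_mul_diagonal_eq_one fun n => (hQ n).2) hFinvF
  · intro i j hij
    rw [hA, hFinv]
    exact blockT_transitionInverse_mul_diagonal_mul_apply_eq_zero _ Qinv hij

/-- Theorem 1: the inverse kernel matrix
`P̌⁻¹ = F⁻ᵀ Q⁻¹ F⁻¹` is exactly sparse (block-tridiagonal). -/
theorem inverse_kernel_block_tridiagonal
    {d N : ℕ} (t : Fin (N + 1) → ℝ) (ht : StrictMono t)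
    (Φ : ℝ → ℝ → Matrix (Fin d) (Fin d) ℝ)
    (hΦ_id : ∀ s : ℝ, Φ s s = 1)
    (hΦ_comp : ∀ a b c : ℝ, Φ a b * Φ b c = Φ a c)
    (Q Qinv : Fin (N + 1) → Matrix (Fin d) (Fin d) ℝ)
    (hQ : ∀ n, Q n * Qinv n = 1 ∧ Qinv n * Q n = 1)
    (F Finv : Matrix (Fin (N + 1)) (Fin (N + 1)) (Matrix (Fin d) (Fin d) ℝ))
    (hF : ∀ i j : Fin (N + 1),
      F i j = if (j : ℕ) ≤ (i : ℕ) then Φ (t i) (t j) else 0)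
    (hFinv : ∀ i j : Fin (N + 1),
      Finv i j = if (i : ℕ) = (j : ℕ) + 1 then -Φ (t i) (t j)
                 else if j = i then 1 else 0)
    (P A : Matrix (Fin (N + 1)) (Fin (N + 1)) (Matrix (Fin d) (Fin d) ℝ))
    (hP : P = F * Matrix.diagonal Q * blockT F)
    (hA : A = blockT Finv * Matrix.diagonal Qinv * Finv) :
    (P * A = 1 ∧ A * P = 1) ∧
      ∀ i j : Fin (N + 1), ((i : ℕ) + 1 < (j : ℕ) ∨ (j : ℕ) + 1 < (i : ℕ)) →
        A i j = 0 :=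
  inverse_kernel_block_tridiagonal_general t Φ hΦ_id hΦ_comp Q Qinv hQ F Finv hF hFinv P A hP hA
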